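/- Consider percolating homogeneous long-range percolation on ℤ^d with non-increasing connection function λ(r) = r^{−β} L(r), where L is slowly varying and β > d. Let α > 0 and d < β' < β'' < min(2d, β) with λ(r) ≤ α r^{−β''} for all r ≥ 1, let c = c(α, β'', β') be the constant for which the bound P(D(0,x) ≤ n) ≤ (K(n))^{β'} ‖x‖^{−β'} holds for all n ∈ ℕ and ‖x‖ > K(n), where γ := log(2d/β')/log 2 and K(n) := exp(c n^γ) + 1. Then there exists a finite constant C such that E(|B_k|) ≤ C (K(k))^d for all k ∈ ℕ; consequently, since γ < 1, limsup_{k→∞} (E(|B_k|))^{1/k} = 1. -/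

import Mathlib

open MeasureTheory ProbabilityTheory Filter Set
open scoped ENNReal NNReal

noncomputable section

namespace LongRangePercolation

/-- Vertices of the lattice `ℤ^d`. -/
abbrev Vtx (d : ℕ) := Fin d → ℤ

variable {d : ℕ} {Ω : Type*}

/-- The random graph determined by an edge configuration `ω`:
`x` and `y` are adjacent iff they are distinct and the edge `{x, y}` is open in `ω`. -/
def percGraph (edge : Sym2 (Vtx d) → Ω → Bool) (ω : Ω) : SimpleGraph (Vtx d) where
  Adj x y := x ≠ y ∧ edge s(x, y) ω = true
  symm := by
    constructor
    intro x y h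
    refine ⟨h.1.symm, ?_⟩
    rw [Sym2.eq_swap]
    exact h.2
  loopless := by constructor; intro x h; exact h.1 rfl

/-- The event that the origin belongs to an infinite cluster. -/
def percEvent (edge : Sym2 (Vtx d) → Ω → Bool) : Set Ω :=
  {ω | {y : Vtx d | (percGraph edge ω).Reachable 0 y}.Infinite}

/-- The `k`-ball around the origin in the graph metric. -/
def ball (edge : Sym2 (Vtx d) → Ω → Bool) (ω : Ω) (k : ℕ) : Set (Vtx d) :=
  {y | (percGraph edge ω).edist 0 y ≤ (k : ℕ∞)}

/-- Expected size of the `k`-ball, `E|B_k|`, as an extended nonnegative real. -/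
def EB [MeasurableSpace Ω] (μ : Measure Ω) (edge : Sym2 (Vtx d) → Ω → Bool) (k : ℕ) : ℝ≥0∞ :=
  ∫⁻ ω, ((ball edge ω k).encard : ℝ≥0∞) ∂μ

/-- `|B_k|^{1/k}` as an extended nonnegative real. -/
def growth (edge : Sym2 (Vtx d) → Ω → Bool) (ω : Ω) (k : ℕ) : ℝ≥0∞ :=
  ((ball edge ω k).encard : ℝ≥0∞) ^ (1 / (k : ℝ))

/-- A function `L : (0,∞) → (0,∞)` is slowly varying if `L(cr)/L(r) → 1` as `r → ∞`
for every `c > 0`. -/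
def SlowlyVarying (L : ℝ → ℝ) : Prop :=
  ∀ c : ℝ, 0 < c → Tendsto (fun r => L (c * r) / L r) atTop (nhds 1)

/-- Bundled hypotheses asserting that `(μ, edge)` is a homogeneous long-range percolation
model on `ℤ^d` with connection function `lam`: the edge indicators are independent, and an
edge between distinct `x` and `y` is present with probability `1 - exp(-λ(‖x - y‖))`,
where `‖·‖` is the `L^∞` norm. -/
structure IsLRPModel (d : ℕ) {Ω : Type*} [MeasurableSpace Ω] (μ : Measure Ω)
    (edge : Sym2 (Vtx d) → Ω → Bool) (lam : ℝ → ℝ) : Prop where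
  d_pos : 0 < d
  prob : IsProbabilityMeasure μ
  meas : ∀ e, Measurable (edge e)
  indep : iIndepFun edge μ
  lam_pos : ∀ r : ℝ, 0 < r → 0 < lam r
  edge_prob : ∀ x y : Vtx d, x ≠ y →
    μ {ω | edge s(x, y) ω = true} = ENNReal.ofReal (1 - Real.exp (-(lam ‖x - y‖)))

/-- The percolation graph restricted to a vertex set `V` (only edges inside `V`). -/
def restGraph (edge : Sym2 (Vtx d) → Ω → Bool) (ω : Ω) (V : Set (Vtx d)) :
    SimpleGraph (Vtx d) where
  Adj x y := x ∈ V ∧ y ∈ V ∧ (percGraph edge ω).Adj x y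
  symm := by
    constructor
    intro x y h
    exact ⟨h.2.1, h.1, (percGraph edge ω).adj_symm h.2.2⟩
  loopless := by
    constructor
    intro x h
    exact (percGraph edge ω).irrefl h.2.2

/-- The cluster (connected component, as a vertex set) of `x` in a graph `G`. -/
def cluster (G : SimpleGraph (Vtx d)) (x : Vtx d) : Set (Vtx d) :=
  {y | G.Reachable x y}

/-- The box `V_K = ℤ^d ∩ [⌈-K/2⌉, ⌈K/2⌉)^d`. -/
def VK (d : ℕ) (r : ℕ) : Set (Vtx d) :=
  {x | ∀ i, ⌈-(r : ℝ) / 2⌉ ≤ x i ∧ x i < ⌈(r : ℝ) / 2⌉}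

/-- The size of the largest cluster of the percolation graph restricted to `V_r`. -/
def maxClSize (edge : Sym2 (Vtx d) → Ω → Bool) (ω : Ω) (r : ℕ) : ℕ∞ :=
  ⨆ x ∈ VK d r, (cluster (restGraph edge ω (VK d r)) x).encard

/-! ### The renormalisation construction -/

/-- `l_i = l_0^(2^i)`. -/
def lseq (l0 i : ℕ) : ℕ := l0 ^ (2 ^ i)

/-- The level-`i` block with index `n`:
`Λ_i(n) = ℤ^d ∩ ([-(l_i - 1)/2, (l_i - 1)/2]^d + n l_i)` (for odd `l_0`). -/
def block (d l0 i : ℕ) (n : Vtx d) : Set (Vtx d) :=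
  {x | ∀ j, |x j - n j * (lseq l0 i : ℤ)| ≤ ((lseq l0 i : ℤ) - 1) / 2}

/-- The index of the level-`i` block containing `x`. -/
def blockIdx (d l0 i : ℕ) (x : Vtx d) : Vtx d :=
  fun j => Int.fdiv (x j + ((lseq l0 i : ℤ) - 1) / 2) (lseq l0 i : ℤ)

/-- `h_i = (l_0^d + 1) 2^i - 1`. -/
def hseq (d l0 i : ℕ) : ℕ := (l0 ^ d + 1) * 2 ^ i - 1

/-- `D_i(x)`: the set of vertices of the level-`i` block of `x` within graph distance `h_i`
of `x` in the graph restricted to that block. -/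
def Dset (edge : Sym2 (Vtx d) → Ω → Bool) (l0 : ℕ) (ω : Ω) (i : ℕ) (x : Vtx d) :
    Set (Vtx d) :=
  {y | y ∈ block d l0 i (blockIdx d l0 i x) ∧
    (restGraph edge ω (block d l0 i (blockIdx d l0 i x))).edist x y ≤ (hseq d l0 i : ℕ∞)}

/-- `M_i = Π_{j=0}^i m_j`, defined by `M_0 = ρ l_0^d`, `M_{i+1} = c_0 L(l_{i+1}) M_i^2`
with `c_0 = 2ρ/25`. -/
def Mseq (d l0 : ℕ) (L : ℝ → ℝ) (ρ : ℝ) : ℕ → ℝ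
  | 0 => ρ * (l0 : ℝ) ^ d
  | i + 1 => (2 * ρ / 25) * L ((lseq l0 (i + 1) : ℕ) : ℝ) * (Mseq d l0 L ρ i) ^ 2

/-- `m_0 = ρ l_0^d` and `m_{i+1} = c_0 L(l_{i+1}) M_i` with `c_0 = 2ρ/25`. -/
def mseq (d l0 : ℕ) (L : ℝ → ℝ) (ρ : ℝ) : ℕ → ℝ
  | 0 => ρ * (l0 : ℝ) ^ d
  | i + 1 => (2 * ρ / 25) * L ((lseq l0 (i + 1) : ℕ) : ℝ) * Mseq d l0 L ρ i

/-- `x` is good up to level `i` in configuration `ω`. -/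
def good (edge : Sym2 (Vtx d) → Ω → Bool) (l0 : ℕ) (L : ℝ → ℝ) (ρ : ℝ) :
    ℕ → Vtx d → Ω → Prop
  | 0, x, ω =>
      ENNReal.ofReal (mseq d l0 L ρ 0) ≤ ((Dset edge l0 ω 0 x).encard : ℝ≥0∞)
  | i + 1, x, ω =>
      good edge l0 L ρ i x ω ∧
      ENNReal.ofReal (mseq d l0 L ρ (i + 1)) ≤
        (({n : Vtx d |
            block d l0 i n ⊆ block d l0 (i + 1) (blockIdx d l0 (i + 1) x) ∧
            ∃ y ∈ block d l0 i n,
              y ∉ block d l0 i 0 ∪ block d l0 i (blockIdx d l0 i x) ∧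
              good edge l0 L ρ i y ω ∧
              ∃ z ∈ Dset edge l0 ω i x, (percGraph edge ω).Adj y z}).encard : ℝ≥0∞)

/-- A vertex is ultimately good if it is good up to every level. -/
def ultGood (edge : Sym2 (Vtx d) → Ω → Bool) (l0 : ℕ) (L : ℝ → ℝ) (ρ : ℝ)
    (x : Vtx d) (ω : Ω) : Prop :=
  ∀ i : ℕ, good edge l0 L ρ i x ω

end LongRangePercolation

open LongRangePercolation

/-! `E|B_k| = ∑ₓ P(D(0,x) ≤ k)`, and with `K = K(k)` each term is at most
`min(1, (K/‖x‖)^β') = (K / max(K, ‖x‖))^β'`. Since `max(K, ‖x‖) ≥ max(K, |xᵢ|)` for every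
coordinate, this is at most `∏ᵢ (K / max(K, |xᵢ|))^(β'/d)`, so the lattice sum is bounded by the
`d`-th power of a one-dimensional sum, which is `O(K)` by the integral test because `β'/d > 1`.
Hence `E|B_k| ≤ C K(k)^d`; the `k`-th root of this bound tends to `1` because
`log K(k) = O(k^γ)` with `γ < 1`, while `E|B_k| ≥ 1`. -/

theorem SimpleGraph.edist_le_add_one_iff {V : Type*} {G : SimpleGraph V} {u v : V} {n : ℕ} :
    G.edist u v ≤ n + 1 ↔ u = v ∨ ∃ w, G.Adj u w ∧ G.edist w v ≤ n := by
  constructor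
  · intro h
    obtain ⟨p, hp⟩ := G.exists_walk_of_edist_ne_top (h.trans_lt (by simp)).ne
    cases p with
    | nil => exact .inl rfl
    | cons hadj q =>
      refine .inr ⟨_, hadj, (SimpleGraph.edist_le q).trans ?_⟩
      rw [← hp, SimpleGraph.Walk.length_cons, Nat.cast_add, Nat.cast_one] at h
      exact (ENat.add_le_add_iff_right ENat.one_ne_top).mp h
  · rintro (rfl | ⟨w, hadj, hw⟩)
    · simp
    · calc G.edist u v ≤ G.edist u w + G.edist w v := G.edist_triangle
        _ ≤ 1 + n := add_le_add (SimpleGraph.edist_eq_one_iff_adj.mpr hadj).le hw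
        _ = n + 1 := add_comm _ _

theorem MeasureTheory.lintegral_encard_eq_tsum {α Ω : Type*} [Countable α] [MeasurableSpace Ω]
    (μ : Measure Ω) {A : α → Set Ω} (hA : ∀ x, MeasurableSet (A x)) :
    ∫⁻ ω, ({x | ω ∈ A x}.encard : ℝ≥0∞) ∂μ = ∑' x, μ (A x) := by
  have hcount : ∀ ω, ({x | ω ∈ A x}.encard : ℝ≥0∞) = ∑' x, (A x).indicator 1 ω := by
    intro ω
    rw [← ENNReal.tsum_set_one, tsum_subtype _ (fun _ => (1 : ℝ≥0∞))]
    rfl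
  simp_rw [hcount]
  rw [lintegral_tsum fun x => (measurable_one.indicator (hA x)).aemeasurable]
  simp_rw [lintegral_indicator_one (hA _)]

theorem ENNReal.tsum_prod_apply_le_pow {ι α : Type*} [Fintype ι] (f : α → ℝ≥0∞) :
    ∑' x : ι → α, ∏ i, f (x i) ≤ (∑' a, f a) ^ Fintype.card ι := by
  classical
  rw [ENNReal.tsum_eq_iSup_sum]
  refine iSup_le fun F => ?_
  have hF : F ⊆ Fintype.piFinset fun i => F.image (· i) := fun x hx =>
    Fintype.mem_piFinset.mpr fun i => Finset.mem_image_of_mem _ hx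
  calc ∑ x ∈ F, ∏ i, f (x i)
      ≤ ∑ x ∈ Fintype.piFinset fun i => F.image (· i), ∏ i, f (x i) :=
        Finset.sum_le_sum_of_subset hF
    _ = ∏ i, ∑ a ∈ F.image (· i), f a := (Finset.prod_univ_sum _ _).symm
    _ ≤ ∏ _i : ι, ∑' a, f a := by gcongr; exact ENNReal.sum_le_tsum _
    _ = (∑' a, f a) ^ Fintype.card ι := Finset.prod_const _

theorem Real.tsum_rpow_neg_nat_add_le {t : ℝ} (ht : 1 < t) {N : ℕ} (hN : 0 < N) :
    ∑' n : ℕ, ((n + N + 1 : ℕ) : ℝ) ^ (-t) ≤ (N : ℝ) ^ (1 - t) / (t - 1) := by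
  have hN' : (0 : ℝ) < N := Nat.cast_pos.mpr hN
  have hanti : AntitoneOn (fun x : ℝ => x ^ (-t)) (Ici (N : ℝ)) := fun x hx y _ hxy =>
    Real.rpow_le_rpow_of_nonpos (hN'.trans_le hx) hxy (by linarith)
  have hint := hanti.tsum_comp_add_le_integral N
    (integrableOn_Ioi_rpow_of_lt (by linarith) hN')
    fun x hx => Real.rpow_nonneg (hN'.trans hx).le _
  rw [integral_Ioi_rpow_of_lt (by linarith) hN'] at hint
  convert hint using 1
  rw [neg_div, ← div_neg]
  ring_nf

theorem Real.rpow_mul_tsum_rpow_neg_nat_add_le {K t : ℝ} (hK : 0 < K) (ht : 1 < t) {N : ℕ}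
    (hN : 0 < N) (hKN : K ≤ 2 * N) :
    K ^ t * ∑' n : ℕ, ((n + N + 1 : ℕ) : ℝ) ^ (-t) ≤ 2 ^ (t - 1) / (t - 1) * K := by
  calc K ^ t * ∑' n : ℕ, ((n + N + 1 : ℕ) : ℝ) ^ (-t)
      ≤ K ^ t * ((N : ℝ) ^ (1 - t) / (t - 1)) := by
        gcongr
        exact Real.tsum_rpow_neg_nat_add_le ht hN
    _ ≤ K ^ t * ((K / 2) ^ (1 - t) / (t - 1)) := by
        have := Real.rpow_le_rpow_of_nonpos (by positivity) (by linarith : K / 2 ≤ N)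
          (by linarith : 1 - t ≤ 0)
        gcongr
    _ = 2 ^ (t - 1) / (t - 1) * K := by
        rw [Real.div_rpow hK.le zero_le_two, Real.rpow_sub two_pos, Real.rpow_sub hK,
          Real.rpow_one, Real.rpow_one, Real.rpow_sub_one two_ne_zero]
        have : t - 1 ≠ 0 := by linarith
        field_simp

theorem ENNReal.tsum_ofReal_div_max_rpow_le {K t : ℝ} (hK : 1 ≤ K) (ht : 1 < t) :
    ∑' n : ℕ, ENNReal.ofReal ((K / max K n) ^ t) ≤
      ENNReal.ofReal ((2 + 2 ^ (t - 1) / (t - 1)) * K) := by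
  set N := ⌊K⌋₊
  have hK0 : 0 < K := by linarith
  have hN : 0 < N := Nat.floor_pos.mpr hK
  have hKN : K < N + 1 := Nat.lt_floor_add_one K
  have hhead : ∑ n ∈ Finset.range (N + 1), ENNReal.ofReal ((K / max K n) ^ t) ≤
      ENNReal.ofReal (2 * K) := by
    calc ∑ n ∈ Finset.range (N + 1), ENNReal.ofReal ((K / max K n) ^ t)
        ≤ ∑ _n ∈ Finset.range (N + 1), ENNReal.ofReal 1 := by
          refine Finset.sum_le_sum fun n _ => ENNReal.ofReal_le_ofReal ?_
          exact Real.rpow_le_one (by positivity)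
            ((div_le_one (by positivity)).mpr (le_max_left _ _)) (by linarith)
      _ = ENNReal.ofReal ((N + 1 : ℕ) : ℝ) := by rw [ENNReal.ofReal_natCast]; simp
      _ ≤ ENNReal.ofReal (2 * K) := by
          gcongr
          push_cast
          linarith [Nat.floor_le hK0.le, (Nat.one_le_cast (α := ℝ)).mpr hN]
  have htail_term : ∀ n : ℕ, (K / max K ((n + (N + 1) : ℕ) : ℝ)) ^ t =
      K ^ t * ((n + N + 1 : ℕ) : ℝ) ^ (-t) := fun n => by
    have hlt : K < ((n + (N + 1) : ℕ) : ℝ) := by push_cast; linarith [(n.cast_nonneg : (0:ℝ) ≤ n)]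
    rw [max_eq_right hlt.le, Real.div_rpow hK0.le (by linarith), Real.rpow_neg (by linarith),
      div_eq_mul_inv, ← add_assoc]
  have hsummable : Summable fun n : ℕ => ((n + N + 1 : ℕ) : ℝ) ^ (-t) :=
    (summable_nat_add_iff (N + 1)).mpr (Real.summable_nat_rpow.mpr (by linarith))
  have htail : ∑' n : ℕ, ENNReal.ofReal ((K / max K ((n + (N + 1) : ℕ) : ℝ)) ^ t) ≤
      ENNReal.ofReal (2 ^ (t - 1) / (t - 1) * K) := by
    simp_rw [htail_term]
    rw [← ENNReal.ofReal_tsum_of_nonneg (fun n => by positivity) (hsummable.mul_left _),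
      tsum_mul_left]
    exact ENNReal.ofReal_le_ofReal (Real.rpow_mul_tsum_rpow_neg_nat_add_le hK0 ht hN
      (by linarith [(Nat.one_le_cast (α := ℝ)).mpr hN]))
  rw [← ENNReal.summable.sum_add_tsum_nat_add' (k := N + 1)]
  calc _ ≤ ENNReal.ofReal (2 * K) + ENNReal.ofReal (2 ^ (t - 1) / (t - 1) * K) := by
        push_cast at htail ⊢
        exact add_le_add hhead htail
    _ = ENNReal.ofReal ((2 + 2 ^ (t - 1) / (t - 1)) * K) := by
        rw [← ENNReal.ofReal_add (by positivity) (by have := sub_pos.mpr ht; positivity), add_mul]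

theorem ENNReal.tsum_int_ofReal_div_max_rpow_le {K t : ℝ} (hK : 1 ≤ K) (ht : 1 < t) :
    ∑' m : ℤ, ENNReal.ofReal ((K / max K ‖m‖) ^ t) ≤
      ENNReal.ofReal (2 * (2 + 2 ^ (t - 1) / (t - 1)) * K) := by
  have hanti : ∀ n : ℕ, ENNReal.ofReal ((K / max K ((n + 1 : ℕ) : ℝ)) ^ t) ≤
      ENNReal.ofReal ((K / max K n) ^ t) := fun n => by
    gcongr
    exact n.le_succ
  rw [tsum_of_nat_of_neg_add_one ENNReal.summable ENNReal.summable]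
  calc _ ≤ ∑' n : ℕ, ENNReal.ofReal ((K / max K n) ^ t) +
        ∑' n : ℕ, ENNReal.ofReal ((K / max K n) ^ t) := by
        refine add_le_add (tsum_congr fun n => by simp).le (ENNReal.tsum_le_tsum fun n => ?_)
        convert hanti n using 5
        rw [norm_neg]
        exact_mod_cast Int.norm_natCast (n + 1)
    _ ≤ _ := by
        rw [← two_mul, mul_assoc, ENNReal.ofReal_mul zero_le_two, ENNReal.ofReal_ofNat]
        gcongr
        exact ENNReal.tsum_ofReal_div_max_rpow_le hK ht

theorem exists_tsum_ofReal_div_max_norm_rpow_le {d : ℕ} (hd : 0 < d) {s : ℝ} (hs : d < s) :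
    ∃ C : ℝ, 0 < C ∧ ∀ K : ℝ, 1 ≤ K →
      ∑' x : Fin d → ℤ, ENNReal.ofReal ((K / max K ‖x‖) ^ s) ≤ ENNReal.ofReal (C * K ^ d) := by
  have hd' : (0 : ℝ) < d := Nat.cast_pos.mpr hd
  set t := s / d
  have ht : 1 < t := (one_lt_div hd').mpr hs
  set A := 2 * (2 + 2 ^ (t - 1) / (t - 1))
  have hA : 0 < A := by have := sub_pos.mpr ht; positivity
  refine ⟨A ^ d, pow_pos hA d, fun K hK => ?_⟩
  have hK0 : 0 < K := by linarith
  have hsplit : ∀ x : Fin d → ℤ, ENNReal.ofReal ((K / max K ‖x‖) ^ s) ≤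
      ∏ i, ENNReal.ofReal ((K / max K ‖x i‖) ^ t) := fun x => by
    rw [← ENNReal.ofReal_prod_of_nonneg fun i _ => by positivity]
    refine ENNReal.ofReal_le_ofReal ?_
    calc (K / max K ‖x‖) ^ s = ∏ _i : Fin d, (K / max K ‖x‖) ^ t := by
          rw [Finset.prod_const, Finset.card_univ, Fintype.card_fin, ← Real.rpow_mul_natCast
            (by positivity), div_mul_cancel₀ _ hd'.ne']
      _ ≤ ∏ i, (K / max K ‖x i‖) ^ t := by
          gcongr with i
          exact norm_le_pi_norm x i
  calc ∑' x : Fin d → ℤ, ENNReal.ofReal ((K / max K ‖x‖) ^ s)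
      ≤ ∑' x : Fin d → ℤ, ∏ i, ENNReal.ofReal ((K / max K ‖x i‖) ^ t) :=
        ENNReal.tsum_le_tsum hsplit
    _ ≤ (∑' m : ℤ, ENNReal.ofReal ((K / max K ‖m‖) ^ t)) ^ d := by
        simpa using ENNReal.tsum_prod_apply_le_pow (ι := Fin d) _
    _ ≤ ENNReal.ofReal (A * K) ^ d := by
        gcongr
        exact ENNReal.tsum_int_ofReal_div_max_rpow_le hK ht
    _ = ENNReal.ofReal (A ^ d * K ^ d) := by
        rw [← ENNReal.ofReal_pow (by positivity), mul_pow]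

theorem ENNReal.le_ofReal_div_max_rpow {p : ℝ≥0∞} {K r s : ℝ} (hK : 0 < K) (hp : p ≤ 1)
    (hfar : K < r → p ≤ ENNReal.ofReal (K ^ s * r ^ (-s))) :
    p ≤ ENNReal.ofReal ((K / max K r) ^ s) := by
  rcases lt_or_ge K r with hr | hr
  · rw [max_eq_right hr.le, Real.div_rpow hK.le (hK.trans hr).le,
      div_eq_mul_inv, ← Real.rpow_neg (hK.trans hr).le]
    exact hfar hr
  · rwa [max_eq_left hr, div_self hK.ne', Real.one_rpow, ENNReal.ofReal_one]

theorem tendsto_mul_exp_mul_rpow_rpow_one_div {C a γ : ℝ} (hC : 0 < C) (hγ : γ < 1) :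
    Tendsto (fun k : ℕ => (C * Real.exp (a * (k : ℝ) ^ γ)) ^ (1 / (k : ℝ))) atTop (nhds 1) := by
  have hpow : Tendsto (fun k : ℕ => (k : ℝ) ^ (γ - 1)) atTop (nhds 0) := by
    simpa [Function.comp_def] using (tendsto_rpow_neg_atTop (by linarith : 0 < 1 - γ)).comp
      (tendsto_natCast_atTop_atTop (R := ℝ))
  have hexponent : Tendsto (fun k : ℕ => Real.log C * (k : ℝ)⁻¹ + a * (k : ℝ) ^ (γ - 1))
      atTop (nhds 0) := by
    simpa using (tendsto_inv_atTop_nhds_zero_nat.const_mul (Real.log C)).add (hpow.const_mul a)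
  have hexp := (Real.continuous_exp.tendsto 0).comp hexponent
  rw [Real.exp_zero] at hexp
  refine hexp.congr' ((eventually_ge_atTop 1).mono fun k hk => ?_)
  have hk0 : (k : ℝ) ≠ 0 := by positivity
  dsimp only [Function.comp_apply]
  rw [Real.rpow_def_of_pos (by positivity : 0 < C * Real.exp (a * (k : ℝ) ^ γ)),
    Real.log_mul hC.ne' (Real.exp_ne_zero _), Real.log_exp, Real.rpow_sub_one hk0]
  ring_nf

theorem ENNReal.limsup_rpow_one_div_eq_one {a : ℕ → ℝ≥0∞} {b : ℕ → ℝ} (ha : ∀ k, 1 ≤ a k)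
    (hab : ∀ k, a k ≤ ENNReal.ofReal (b k))
    (hb : Tendsto (fun k : ℕ => b k ^ (1 / (k : ℝ))) atTop (nhds 1)) :
    limsup (fun k : ℕ => a k ^ (1 / (k : ℝ))) atTop = 1 := by
  have hb0 : ∀ k, 0 ≤ b k := fun k =>
    zero_le_one.trans (ENNReal.one_le_ofReal.mp ((ha k).trans (hab k)))
  have hupper : ∀ k : ℕ, a k ^ (1 / (k : ℝ)) ≤ ENNReal.ofReal (b k ^ (1 / (k : ℝ))) := fun k => by
    rw [← ENNReal.ofReal_rpow_of_nonneg (hb0 k) (by positivity)]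
    gcongr
    exact hab k
  refine le_antisymm ?_ (le_limsup_of_frequently_le ((eventually_gt_atTop 0).mono fun k hk =>
    ENNReal.one_le_rpow (ha k) (by positivity)).frequently)
  calc limsup (fun k : ℕ => a k ^ (1 / (k : ℝ))) atTop
      ≤ limsup (fun k : ℕ => ENNReal.ofReal (b k ^ (1 / (k : ℝ)))) atTop :=
        limsup_le_limsup (Eventually.of_forall hupper)
    _ = 1 := by
        simpa [Function.comp_def] using ((ENNReal.continuous_ofReal.tendsto 1).comp hb).limsup_eq

namespace LongRangePercolation

variable {d : ℕ} {Ω : Type*} [MeasurableSpace Ω]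

theorem measurable_edist_le {edge : Sym2 (Vtx d) → Ω → Bool} (hmeas : ∀ e, Measurable (edge e))
    (n : ℕ) (u v : Vtx d) : Measurable fun ω => (percGraph edge ω).edist u v ≤ n := by
  induction n generalizing u with
  | zero =>
    simp_rw [Nat.cast_zero, nonpos_iff_eq_zero, SimpleGraph.edist_eq_zero_iff]
    exact measurable_const
  | succ n ih =>
    simp_rw [Nat.cast_succ, SimpleGraph.edist_le_add_one_iff]
    refine measurable_const.or (Measurable.exists fun w => Measurable.and ?_ (ih w))
    exact measurable_const.and (measurableSet_setOfPred.mp (hmeas _ (measurableSet_singleton true)))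

theorem EB_eq_tsum (μ : Measure Ω) {edge : Sym2 (Vtx d) → Ω → Bool}
    (hmeas : ∀ e, Measurable (edge e)) (k : ℕ) :
    EB μ edge k = ∑' x, μ {ω | (percGraph edge ω).edist 0 x ≤ k} :=
  lintegral_encard_eq_tsum μ fun x => measurableSet_setOfPred.mpr (measurable_edist_le hmeas k 0 x)

theorem one_le_EB (μ : Measure Ω) [IsProbabilityMeasure μ] (edge : Sym2 (Vtx d) → Ω → Bool)
    (k : ℕ) : 1 ≤ EB μ edge k := by
  have hball : ∀ ω, (1 : ℝ≥0∞) ≤ (ball edge ω k).encard := fun ω => by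
    exact_mod_cast Set.one_le_encard_iff_nonempty.mpr ⟨0, by simp [ball]⟩
  calc (1 : ℝ≥0∞) = ∫⁻ _, 1 ∂μ := by simp
    _ ≤ EB μ edge k := lintegral_mono hball

end LongRangePercolation

theorem stmt16_general {d : ℕ} {Ω : Type*} [MeasurableSpace Ω] (μ : Measure Ω)
    (edge : Sym2 (Vtx d) → Ω → Bool) (L : ℝ → ℝ) (β : ℝ)
    (hmodel : IsLRPModel d μ edge (fun r => r ^ (-β) * L r))
    (β' : ℝ)
    (h1 : (d : ℝ) < β')
    (c : ℝ) (hc : 0 < c)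
    (hbound : ∀ (n : ℕ) (x : Vtx d),
        Real.exp (c * (n : ℝ) ^ (Real.log (2 * (d : ℝ) / β') / Real.log 2)) + 1 < ‖x‖ →
        μ {ω | (percGraph edge ω).edist 0 x ≤ (n : ℕ∞)} ≤
          ENNReal.ofReal
            ((Real.exp (c * (n : ℝ) ^ (Real.log (2 * (d : ℝ) / β') / Real.log 2)) + 1) ^ β'
              * ‖x‖ ^ (-β'))) :
    (∃ C : ℝ≥0∞, C < ⊤ ∧ ∀ k : ℕ,
        EB μ edge k ≤ C * ENNReal.ofReal
          ((Real.exp (c * (k : ℝ) ^ (Real.log (2 * (d : ℝ) / β') / Real.log 2)) + 1) ^ d)) ∧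
    atTop.limsup (fun k : ℕ => EB μ edge k ^ (1 / (k : ℝ))) = 1 := by
  have := hmodel.prob
  have hd : (0 : ℝ) < d := Nat.cast_pos.mpr hmodel.d_pos
  set γ := Real.log (2 * (d : ℝ) / β') / Real.log 2
  set K : ℕ → ℝ := fun k => Real.exp (c * (k : ℝ) ^ γ) + 1
  have hexp_ge : ∀ k : ℕ, 1 ≤ Real.exp (c * (k : ℝ) ^ γ) := fun k => Real.one_le_exp (by positivity)
  obtain ⟨C, hC, hsum⟩ := exists_tsum_ofReal_div_max_norm_rpow_le hmodel.d_pos h1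
  have hEB : ∀ k, EB μ edge k ≤ ENNReal.ofReal (C * K k ^ d) := fun k => by
    rw [EB_eq_tsum μ hmodel.meas]
    refine (ENNReal.tsum_le_tsum fun x => ?_).trans (hsum _ (by linarith [hexp_ge k]))
    exact ENNReal.le_ofReal_div_max_rpow (by linarith [hexp_ge k]) prob_le_one (hbound k x)
  refine ⟨⟨ENNReal.ofReal C, ENNReal.ofReal_lt_top,
    fun k => (hEB k).trans_eq (ENNReal.ofReal_mul hC.le)⟩, ?_⟩
  have hγ : γ < 1 := by
    rw [div_lt_one (Real.log_pos one_lt_two)]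
    exact Real.log_lt_log (div_pos (mul_pos two_pos hd) (hd.trans h1))
      ((div_lt_iff₀ (hd.trans h1)).mpr (by linarith))
  refine ENNReal.limsup_rpow_one_div_eq_one (one_le_EB μ edge)
    (fun k => (hEB k).trans (ENNReal.ofReal_le_ofReal ?_))
    (tendsto_mul_exp_mul_rpow_rpow_one_div (a := d * c) (by positivity : 0 < C * 2 ^ d) hγ)
  calc C * K k ^ d ≤ C * (2 * Real.exp (c * (k : ℝ) ^ γ)) ^ d := by
        gcongr
        linarith [hexp_ge k]
    _ = C * 2 ^ d * Real.exp (d * c * (k : ℝ) ^ γ) := by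
        rw [mul_pow, ← Real.exp_nat_mul, mul_assoc, mul_assoc]

/-- In the setting of Theorem `nonexpothm` (`λ(r) = r^(-β) L(r)`, `β > d`,
`λ(r) ≤ α r^(-β'')` for `r ≥ 1`, `d < β' < β'' < min(2d, β)`), if `c > 0` is a constant
for which `P(D(0,x) ≤ n) ≤ K(n)^{β'} ‖x‖^{-β'}` holds whenever `‖x‖ > K(n)`, where
`γ = log(2d/β')/log 2` and `K(n) = exp(c n^γ) + 1`, then there is a finite constant `C`
with `E|B_k| ≤ C K(k)^d` for all `k`, and consequently `limsup (E|B_k|)^{1/k} = 1`. -/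
theorem stmt16 {d : ℕ} {Ω : Type*} [MeasurableSpace Ω] (μ : Measure Ω)
    (edge : Sym2 (Vtx d) → Ω → Bool) (L : ℝ → ℝ) (β : ℝ)
    (hβ : (d : ℝ) < β) (hL : SlowlyVarying L)
    (hmodel : IsLRPModel d μ edge (fun r => r ^ (-β) * L r))
    (hmono : ∀ r s : ℝ, 0 < r → r ≤ s → s ^ (-β) * L s ≤ r ^ (-β) * L r)
    (hperc : 0 < μ (percEvent edge))
    (α β' β'' : ℝ) (hα : 0 < α)
    (h1 : (d : ℝ) < β') (h2 : β' < β'') (h3 : β'' < min (2 * (d : ℝ)) β)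
    (hub : ∀ r : ℝ, 1 ≤ r → r ^ (-β) * L r ≤ α * r ^ (-β''))
    (c : ℝ) (hc : 0 < c)
    (hbound : ∀ (n : ℕ) (x : Vtx d),
        Real.exp (c * (n : ℝ) ^ (Real.log (2 * (d : ℝ) / β') / Real.log 2)) + 1 < ‖x‖ →
        μ {ω | (percGraph edge ω).edist 0 x ≤ (n : ℕ∞)} ≤
          ENNReal.ofReal
            ((Real.exp (c * (n : ℝ) ^ (Real.log (2 * (d : ℝ) / β') / Real.log 2)) + 1) ^ β'
              * ‖x‖ ^ (-β'))) :
    (∃ C : ℝ≥0∞, C < ⊤ ∧ ∀ k : ℕ,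
        EB μ edge k ≤ C * ENNReal.ofReal
          ((Real.exp (c * (k : ℝ) ^ (Real.log (2 * (d : ℝ) / β') / Real.log 2)) + 1) ^ d)) ∧
    atTop.limsup (fun k : ℕ => EB μ edge k ^ (1 / (k : ℝ))) = 1 :=
  stmt16_general μ edge L β hmodel β' h1 c hc hbound
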